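/- arXiv:1711.11245 — 2 statements merged into one kernel-verified Lean document; each statement's English description precedes it below -/
import Mathlib

section
/- Let κ, γ, T₀, P₀, R₀, X be real constants with P₀, R₀ ≠ 0. Suppose ρ_e, u_e, P_e, P₂e, R_e : ℝ → ℝ are smooth functions of x alone, with R_e nowhere zero, such that the time-independent fields ρ(x,t) = ρ_e(x), u(x,t) = u_e(x), P(x,t) = P_e(x), P₂(x,t) = P₂e(x), R(x,t) = R_e(x) satisfy the equations (E1)–(E5) of the one-dimensional dimensionless bubbly-fluid model for all (x,t). Then for every real constant c, the fields ρ(x,t) = ρ_e(x−ct), u(x,t) = u_e(x−ct) + c, P(x,t) = P_e(x−ct), P₂(x,t) = P₂e(x−ct), R(x,t) = R_e(x−ct) also satisfy (E1)–(E5) for all (x,t); i.e., every equilibrium configuration generates a one-parameter family of traveling-wave solutions. -/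
/-- Partial derivative in the first (spatial) variable. -/
noncomputable def pdX (f : ℝ → ℝ → ℝ) (x t : ℝ) : ℝ := deriv (fun y => f y t) x

/-- Partial derivative in the second (time) variable. -/
noncomputable def pdT (f : ℝ → ℝ → ℝ) (x t : ℝ) : ℝ := deriv (fun s => f x s) t

/-- Material derivative `D_t = ∂/∂t + u ∂/∂x`. -/
noncomputable def matD (u f : ℝ → ℝ → ℝ) : ℝ → ℝ → ℝ :=
  fun x t => pdT f x t + u x t * pdX f x t

/-- The one-dimensional dimensionless bubbly-fluid model (E1)–(E5). -/
def SolvesBF (κ γ T₀ P₀ R₀ X : ℝ) (ρ u P P₂ R : ℝ → ℝ → ℝ) : Prop :=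
  (∀ x t : ℝ, pdT ρ x t + pdX (fun a b => ρ a b * u a b) x t = 0) ∧
  (∀ x t : ℝ, pdT (fun a b => ρ a b * u a b) x t
      + pdX (fun a b => ρ a b * (u a b) ^ 2 + P a b) x t
      - pdX (fun a b => pdX u a b) x t + κ * ρ x t = 0) ∧
  (∀ x t : ℝ, P x t = P₂ x t -
      (R x t * matD u (matD u R) x t + (3 / 2) * (matD u R x t) ^ 2
        + (4 / 3) * (matD u R x t) / R x t)) ∧
  (∀ x t : ℝ, matD u P₂ x t + 3 * γ * P₂ x t * (matD u R x t) / R x t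
      + 3 * (γ - 1) * (T₀ / R x t) * ((P₂ x t / P₀) * (R x t / R₀) ^ 3 - 1) = 0) ∧
  (∀ x t : ℝ, (1 - X + (R x t) ^ 3) * ρ x t - 1 = 0)


/-!
The travelling fields are the image of the equilibrium under the Galilean boost of speed `c`:
every field is composed with `(x, t) ↦ x - c t` and the velocity is increased by `c`.
The time derivative of a boosted profile is `-c` times its space derivative, which cancels the
extra `c ∂ₓ` in the material derivative, so `D_t` commutes with the boost and (E3)–(E5)
transfer pointwise. In the conservation laws the `-c ∂ₓ` terms leave the residual of (E1)
unchanged and add `c` times it to the residual of (E2).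
-/

lemma pdX_steady (f : ℝ → ℝ) (x t : ℝ) : pdX (fun a _ => f a) x t = deriv f x :=
  rfl

lemma pdT_steady (f : ℝ → ℝ) (x t : ℝ) : pdT (fun a _ => f a) x t = 0 :=
  deriv_const t (f x)

lemma matD_steady (u f : ℝ → ℝ) :
    matD (fun a _ => u a) (fun a _ => f a) = fun a _ => u a * deriv f a := by
  funext a b
  rw [matD, pdT_steady, pdX_steady, zero_add]

section GalileanBoost

variable (c : ℝ) {f : ℝ → ℝ} {x t : ℝ}

lemma pdX_comp_sub_mul (f : ℝ → ℝ) (x t : ℝ) :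
    pdX (fun a b => f (a - c * b)) x t = deriv f (x - c * t) :=
  deriv_comp_sub_const f (c * t) x

lemma pdT_comp_sub_mul (hf : DifferentiableAt ℝ f (x - c * t)) :
    pdT (fun a b => f (a - c * b)) x t = -c * deriv f (x - c * t) := by
  have hshift : HasDerivAt (fun s => x - c * s) (-c) t := by
    simpa using ((hasDerivAt_id t).const_mul c).const_sub x
  simpa [pdT, mul_comm, Function.comp_def] using (hf.hasDerivAt.comp t hshift).deriv

lemma matD_boost (u : ℝ → ℝ) (hf : Differentiable ℝ f) :
    matD (fun a b => u (a - c * b) + c) (fun a b => f (a - c * b))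
      = fun a b => u (a - c * b) * deriv f (a - c * b) := by
  funext a b
  rw [matD, pdT_comp_sub_mul c (hf _), pdX_comp_sub_mul]
  ring

end GalileanBoost

noncomputable def massResidual (ρ u : ℝ → ℝ → ℝ) (x t : ℝ) : ℝ :=
  pdT ρ x t + pdX (fun a b => ρ a b * u a b) x t

noncomputable def momentumResidual (κ : ℝ) (ρ u P : ℝ → ℝ → ℝ) (x t : ℝ) : ℝ :=
  pdT (fun a b => ρ a b * u a b) x t + pdX (fun a b => ρ a b * (u a b) ^ 2 + P a b) x t
    - pdX (fun a b => pdX u a b) x t + κ * ρ x t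

section Residuals

variable (κ c x t : ℝ) {ρ u P : ℝ → ℝ}

lemma massResidual_steady (ρ u : ℝ → ℝ) :
    massResidual (fun a _ => ρ a) (fun a _ => u a) x t = deriv (fun z => ρ z * u z) x := by
  rw [massResidual, pdT_steady, pdX_steady, zero_add]

lemma massResidual_boost (hρ : DifferentiableAt ℝ ρ (x - c * t))
    (hu : DifferentiableAt ℝ u (x - c * t)) :
    massResidual (fun a b => ρ (a - c * b)) (fun a b => u (a - c * b) + c) x t
      = massResidual (fun a _ => ρ a) (fun a _ => u a) (x - c * t) 0 := by
  have hflux₀ : HasDerivAt (fun z => ρ z * u z) _ (x - c * t) :=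
    hρ.hasDerivAt.mul hu.hasDerivAt
  have hflux : HasDerivAt (fun z => ρ z * (u z + c)) _ (x - c * t) :=
    hρ.hasDerivAt.mul (hu.hasDerivAt.add_const c)
  rw [massResidual_steady, hflux₀.deriv, massResidual, pdT_comp_sub_mul c hρ,
    pdX_comp_sub_mul c (fun z => ρ z * (u z + c)), hflux.deriv]
  ring

lemma momentumResidual_boost (hρ : DifferentiableAt ℝ ρ (x - c * t))
    (hu : DifferentiableAt ℝ u (x - c * t)) (hP : DifferentiableAt ℝ P (x - c * t)) :
    momentumResidual κ (fun a b => ρ (a - c * b)) (fun a b => u (a - c * b) + c)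
        (fun a b => P (a - c * b)) x t
      = momentumResidual κ (fun a _ => ρ a) (fun a _ => u a) (fun a _ => P a) (x - c * t) 0
        + c * massResidual (fun a _ => ρ a) (fun a _ => u a) (x - c * t) 0 := by
  have hviscous : (fun a b => pdX (fun a b => u (a - c * b) + c) a b)
      = fun a b => deriv u (a - c * b) := by
    funext a b
    rw [pdX_comp_sub_mul c (fun z => u z + c), deriv_add_const]
  have hmass₀ : HasDerivAt (fun z => ρ z * u z) _ (x - c * t) :=
    hρ.hasDerivAt.mul hu.hasDerivAt
  have hmomentum : HasDerivAt (fun z => ρ z * (u z + c)) _ (x - c * t) :=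
    hρ.hasDerivAt.mul (hu.hasDerivAt.add_const c)
  have hflux₀ : HasDerivAt (fun z => ρ z * u z ^ 2 + P z) _ (x - c * t) :=
    (hρ.hasDerivAt.mul (hu.hasDerivAt.pow 2)).add hP.hasDerivAt
  have hflux : HasDerivAt (fun z => ρ z * (u z + c) ^ 2 + P z) _ (x - c * t) :=
    (hρ.hasDerivAt.mul ((hu.hasDerivAt.add_const c).pow 2)).add hP.hasDerivAt
  rw [massResidual_steady, hmass₀.deriv, momentumResidual, momentumResidual,
    pdT_comp_sub_mul c hmomentum.differentiableAt,
    pdX_comp_sub_mul c (fun z => ρ z * (u z + c) ^ 2 + P z), hviscous, pdX_comp_sub_mul,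
    hmomentum.deriv, hflux.deriv]
  simp only [pdT_steady, pdX_steady]
  rw [hflux₀.deriv, Pi.pow_apply, Pi.pow_apply]
  ring

end Residuals

theorem traveling_waves_from_equilibria_general (κ γ T₀ P₀ R₀ X : ℝ)
    (ρe ue Pe P2e Re : ℝ → ℝ)
    (hρe : ContDiff ℝ (⊤ : ℕ∞) ρe) (hue : ContDiff ℝ (⊤ : ℕ∞) ue)
    (hPe : ContDiff ℝ (⊤ : ℕ∞) Pe) (hP2e : ContDiff ℝ (⊤ : ℕ∞) P2e)
    (hRe : ContDiff ℝ (⊤ : ℕ∞) Re)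
    (hsol : SolvesBF κ γ T₀ P₀ R₀ X
      (fun x _ => ρe x) (fun x _ => ue x) (fun x _ => Pe x)
      (fun x _ => P2e x) (fun x _ => Re x))
    (c : ℝ) :
    SolvesBF κ γ T₀ P₀ R₀ X
      (fun x t => ρe (x - c * t))
      (fun x t => ue (x - c * t) + c)
      (fun x t => Pe (x - c * t))
      (fun x t => P2e (x - c * t))
      (fun x t => Re (x - c * t)) := by
  obtain ⟨hmass, hmomentum, hpressure, hgas, hvolume⟩ := hsol
  have dρ : Differentiable ℝ ρe := hρe.differentiable (by simp)
  have du : Differentiable ℝ ue := hue.differentiable (by simp)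
  have dP : Differentiable ℝ Pe := hPe.differentiable (by simp)
  have dP2 : Differentiable ℝ P2e := hP2e.differentiable (by simp)
  have dR : Differentiable ℝ Re := hRe.differentiable (by simp)
  have dDR : Differentiable ℝ (fun z => ue z * deriv Re z) :=
    du.mul ((contDiff_infty_iff_deriv.mp hRe).2.differentiable (by simp))
  refine ⟨fun x t => ?_, fun x t => ?_, fun x t => ?_, fun x t => ?_,
    fun x t => hvolume (x - c * t) 0⟩
  · exact (massResidual_boost c x t (dρ _) (du _)).trans (hmass _ 0)
  · refine (momentumResidual_boost κ c x t (dρ _) (du _) (dP _)).trans ?_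
    rw [show momentumResidual κ _ _ _ _ _ = 0 from hmomentum _ 0,
      show massResidual _ _ _ _ = 0 from hmass _ 0, mul_zero, add_zero]
  · simpa only [matD_steady, matD_boost c ue dR, matD_boost c ue dDR]
      using hpressure (x - c * t) 0
  · simpa only [matD_steady, matD_boost c ue dP2, matD_boost c ue dR]
      using hgas (x - c * t) 0

/-- Every equilibrium configuration of the bubbly-fluid model generates a one-parameter
family of traveling-wave solutions (Proposition 2.3 of the paper). -/
theorem traveling_waves_from_equilibria (κ γ T₀ P₀ R₀ X : ℝ) (hP₀ : P₀ ≠ 0) (hR₀ : R₀ ≠ 0)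
    (ρe ue Pe P2e Re : ℝ → ℝ)
    (hρe : ContDiff ℝ (⊤ : ℕ∞) ρe) (hue : ContDiff ℝ (⊤ : ℕ∞) ue)
    (hPe : ContDiff ℝ (⊤ : ℕ∞) Pe) (hP2e : ContDiff ℝ (⊤ : ℕ∞) P2e)
    (hRe : ContDiff ℝ (⊤ : ℕ∞) Re)
    (hRne : ∀ x : ℝ, Re x ≠ 0)
    (hsol : SolvesBF κ γ T₀ P₀ R₀ X
      (fun x _ => ρe x) (fun x _ => ue x) (fun x _ => Pe x)
      (fun x _ => P2e x) (fun x _ => Re x))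
    (c : ℝ) :
    SolvesBF κ γ T₀ P₀ R₀ X
      (fun x t => ρe (x - c * t))
      (fun x t => ue (x - c * t) + c)
      (fun x t => Pe (x - c * t))
      (fun x t => P2e (x - c * t))
      (fun x t => Re (x - c * t)) :=
  traveling_waves_from_equilibria_general κ γ T₀ P₀ R₀ X ρe ue Pe P2e Re hρe hue hPe hP2e hRe hsol c
end

section
/- Let γ be a real constant, R : ℝ → ℝ differentiable with R(t) > 0 for all t, and P₂ : ℝ → ℝ differentiable. Let u₂, q : ℝ×ℝ → ℝ be such that, for each t, the maps r ↦ r²·u₂(r,t) and r ↦ r²·q(r,t) are continuously differentiable on [0, R(t)], and for all r ∈ [0, R(t)]: r²·P₂′(t) + γ·P₂(t)·∂/∂r(r²·u₂(r,t)) + (γ−1)·∂/∂r(r²·q(r,t)) = 0, together with the boundary condition u₂(R(t), t) = R′(t). Then for all t: P₂′(t) + (3γ·P₂(t)/R(t))·R′(t) + (3(γ−1)/R(t))·q(R(t), t) = 0. -/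
open Set

/- Integrating the hypothesis over `[a, b]`, done without integrals: `r³/3 · c + A f r + B g r`
has zero derivative on `[a, b]`, hence is constant there. -/
lemma radial_flux_balance {a b c A B : ℝ} {f g : ℝ → ℝ} (hab : a < b)
    (hf : DifferentiableOn ℝ f (Icc a b)) (hg : DifferentiableOn ℝ g (Icc a b))
    (h : ∀ r ∈ Icc a b,
      r ^ 2 * c + A * derivWithin f (Icc a b) r + B * derivWithin g (Icc a b) r = 0) :
    (b ^ 3 - a ^ 3) / 3 * c + A * (f b - f a) + B * (g b - g a) = 0 := by
  set F : ℝ → ℝ := fun r => r ^ 3 / 3 * c + A * f r + B * g r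
  have hF : ∀ r ∈ Icc a b, HasDerivWithinAt F
      (r ^ 2 * c + A * derivWithin f (Icc a b) r + B * derivWithin g (Icc a b) r) (Icc a b) r := by
    intro r hr
    have hcube : HasDerivAt (fun r : ℝ => r ^ 3 / 3 * c) (r ^ 2 * c) r :=
      (((hasDerivAt_pow 3 r).div_const 3).mul_const c).congr_deriv (by norm_num)
    exact (hcube.hasDerivWithinAt.add ((hf r hr).hasDerivWithinAt.const_mul A)).add
      ((hg r hr).hasDerivWithinAt.const_mul B)
  have hconst := constant_of_derivWithin_zero (fun r hr => (hF r hr).differentiableWithinAt)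
    (fun r hr => by
      rw [(hF r (Ico_subset_Icc_self hr)).derivWithin
        (uniqueDiffOn_Icc hab r (Ico_subset_Icc_self hr))]
      exact h r (Ico_subset_Icc_self hr))
    b (right_mem_Icc.2 hab.le)
  simp only [F] at hconst
  linear_combination hconst

theorem bubble_heat_balance_general (γ : ℝ)
    (R P₂ : ℝ → ℝ)
    (hRpos : ∀ t : ℝ, 0 < R t)
    (u₂ q : ℝ → ℝ → ℝ)
    (hu : ∀ t : ℝ, ContDiffOn ℝ 1 (fun r => r ^ 2 * u₂ r t) (Set.Icc 0 (R t)))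
    (hq : ∀ t : ℝ, ContDiffOn ℝ 1 (fun r => r ^ 2 * q r t) (Set.Icc 0 (R t)))
    (hpde : ∀ t : ℝ, ∀ r ∈ Set.Icc (0 : ℝ) (R t),
      r ^ 2 * deriv P₂ t
        + γ * P₂ t * derivWithin (fun s => s ^ 2 * u₂ s t) (Set.Icc 0 (R t)) r
        + (γ - 1) * derivWithin (fun s => s ^ 2 * q s t) (Set.Icc 0 (R t)) r = 0)
    (hbc : ∀ t : ℝ, u₂ (R t) t = deriv R t) :
    ∀ t : ℝ, deriv P₂ t + 3 * γ * P₂ t / R t * deriv R t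
      + 3 * (γ - 1) / R t * q (R t) t = 0 := by
  intro t
  have hRt := hRpos t
  have hbalance := radial_flux_balance hRt ((hu t).differentiableOn one_ne_zero)
    ((hq t).differentiableOn one_ne_zero) (hpde t)
  rw [hbc t] at hbalance
  have hR := hRt.ne'
  linear_combination (norm := skip) (3 / R t ^ 3) * hbalance
  field_simp
  ring

/-- Integration of the radial gas-energy PDE over the bubble `0 ≤ r ≤ R(t)` yields the
heat-balance ODE (2.10) of the paper. -/
theorem bubble_heat_balance (γ : ℝ)
    (R P₂ : ℝ → ℝ) (hR : Differentiable ℝ R) (hP₂ : Differentiable ℝ P₂)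
    (hRpos : ∀ t : ℝ, 0 < R t)
    (u₂ q : ℝ → ℝ → ℝ)
    (hu : ∀ t : ℝ, ContDiffOn ℝ 1 (fun r => r ^ 2 * u₂ r t) (Set.Icc 0 (R t)))
    (hq : ∀ t : ℝ, ContDiffOn ℝ 1 (fun r => r ^ 2 * q r t) (Set.Icc 0 (R t)))
    (hpde : ∀ t : ℝ, ∀ r ∈ Set.Icc (0 : ℝ) (R t),
      r ^ 2 * deriv P₂ t
        + γ * P₂ t * derivWithin (fun s => s ^ 2 * u₂ s t) (Set.Icc 0 (R t)) r
        + (γ - 1) * derivWithin (fun s => s ^ 2 * q s t) (Set.Icc 0 (R t)) r = 0)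
    (hbc : ∀ t : ℝ, u₂ (R t) t = deriv R t) :
    ∀ t : ℝ, deriv P₂ t + 3 * γ * P₂ t / R t * deriv R t
      + 3 * (γ - 1) / R t * q (R t) t = 0 :=
  bubble_heat_balance_general γ R P₂ hRpos u₂ q hu hq hpde hbc
end
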